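/- arXiv:1805.09627 — 5 statements merged into one kernel-verified Lean document; each statement's English description precedes it below -/
import Mathlib

section
/- The matching polytope equals the set of fractional matchings: with E a finite set and σ₀, σ₁ permutations of E, the convex hull in ℝ^E of the indicator vectors of the perfect matchings of (E, σ₀, σ₁) is exactly the set of functions θ : E → ℝ with θ(e) ≥ 0 for all e ∈ E such that for every cycle C of σ₀ and every cycle C of σ₁ one has Σ_{e∈C} θ(e) = 1. -/
open Finset

variable {E : Type*}

/-- A perfect matching of `(E, σ₀, σ₁)`: a `{0,1}`-valued function on `E` such that every
cycle (orbit) of `σ₀` and every cycle of `σ₁` contains exactly one element with value `1`. -/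
def IsPerfectMatching (σ₀ σ₁ : Equiv.Perm E) (m : E → ℝ) : Prop :=
  (∀ e, m e = 0 ∨ m e = 1) ∧
  (∀ e, ∃! e', σ₀.SameCycle e e' ∧ m e' = 1) ∧
  (∀ e, ∃! e', σ₁.SameCycle e e' ∧ m e' = 1)

/-!
The cycles of `σ₀` and of `σ₁` are the two vertex classes of a bipartite multigraph with edge
set `E`, so this is Birkhoff's theorem for bipartite multigraphs. A fractional perfect matching
`θ` satisfies Hall's condition on its support: the weight `#S` that `θ` puts on the edges at a
set `S` of vertices lies on edges to the neighbours `N(S)` of `S`, which carry total weight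
`#N(S)`. So the support contains a perfect matching `m`. If `θ ≠ m`, let `t < 1` be the least
weight `θ` puts on an edge of `m`: then `θ = t • m + (1 - t) • θ'` for a fractional perfect
matching `θ'` with smaller support, and we conclude by induction on the size of the support.
-/

section FiberSums

variable {α : Type*} [Fintype E] [DecidableEq α] {p : E → α} {θ m : E → ℝ}

variable (p) in
def FiberSumsEqOne (θ : E → ℝ) : Prop :=
  ∀ a, ∑ e ∈ univ with p e = a, θ e = 1

lemma convex_setOf_fiberSumsEqOne : Convex ℝ {θ : E → ℝ | FiberSumsEqOne p θ} := by
  intro θ₁ h₁ θ₂ h₂ a b _ _ hab x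
  simp only [Pi.add_apply, Pi.smul_apply, smul_eq_mul, sum_add_distrib, ← mul_sum, h₁ x, h₂ x,
    mul_one, hab]

lemma FiberSumsEqOne.sum_filter_mem (h : FiberSumsEqOne p θ) (s : Finset α) :
    ∑ e ∈ univ with p e ∈ s, θ e = #s := by
  rw [← sum_fiberwise_eq_sum_filter, sum_congr rfl fun a _ => h a, sum_const, nsmul_one]

lemma FiberSumsEqOne.sum_eq_card [Fintype α] (h : FiberSumsEqOne p θ) :
    ∑ e, θ e = Fintype.card α := by
  simpa using h.sum_filter_mem univ

lemma FiberSumsEqOne.le_one (h : FiberSumsEqOne p θ) (h₀ : 0 ≤ θ) (e : E) : θ e ≤ 1 :=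
  h (p e) ▸ single_le_sum (fun e' _ => h₀ e') (by simp)

lemma FiberSumsEqOne.eq_of_le (hθ : FiberSumsEqOne p θ) (hm : FiberSumsEqOne p m)
    (hle : m ≤ θ) : θ = m := by
  funext e
  have hsum : ∑ e' ∈ univ with p e' = p e, (θ e' - m e') = 0 := by
    rw [sum_sub_distrib, hθ, hm, sub_self]
  have := (sum_eq_zero_iff_of_nonneg fun e' _ => sub_nonneg.2 (hle e')).1 hsum e (by simp)
  linarith

lemma FiberSumsEqOne.smul_sub (hθ : FiberSumsEqOne p θ) (hm : FiberSumsEqOne p m) {t : ℝ}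
    (ht : t ≠ 1) : FiberSumsEqOne p ((1 - t)⁻¹ • (θ - t • m)) := by
  intro a
  simp only [Pi.smul_apply, Pi.sub_apply, smul_eq_mul, ← mul_sum, sum_sub_distrib, hθ a, hm a,
    mul_one]
  exact inv_mul_cancel₀ (sub_ne_zero.2 ht.symm)

lemma fiberSumsEqOne_of_existsUnique (h₀₁ : ∀ e, m e = 0 ∨ m e = 1)
    (h : ∀ a, ∃! e, p e = a ∧ m e = 1) : FiberSumsEqOne p m := by
  intro a
  obtain ⟨e₀, ⟨rfl, hm₀⟩, huniq⟩ := h a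
  rw [sum_eq_single_of_mem e₀ (by simp) fun e he hne => ?_, hm₀]
  exact (h₀₁ e).resolve_right fun h₁ => hne (huniq e ⟨(mem_filter.1 he).2, h₁⟩)

end FiberSums

section Bipartite

variable {α β : Type*} (p : E → α) (q : E → β)

def IsBipartitePerfectMatching (m : E → ℝ) : Prop :=
  (∀ e, m e = 0 ∨ m e = 1) ∧ (∀ a, ∃! e, p e = a ∧ m e = 1) ∧ (∀ b, ∃! e, q e = b ∧ m e = 1)

variable {p q} in
lemma isBipartitePerfectMatching_indicator_range {g : α → E} (hpg : ∀ a, p (g a) = a)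
    (hqg : (q ∘ g).Bijective) : IsBipartitePerfectMatching p q ((Set.range g).indicator 1) := by
  have hmem (e : E) : (Set.range g).indicator 1 e = (1 : ℝ) ↔ ∃ a, g a = e :=
    Set.indicator_eq_one_iff_mem ℝ
  refine ⟨fun e => ?_, fun a => ⟨g a, by simp [hpg], ?_⟩, fun b => ?_⟩
  · simpa using Set.indicator_eq_zero_or_self (Set.range g) (1 : E → ℝ) e
  · rintro e ⟨rfl, he⟩
    obtain ⟨a', rfl⟩ := (hmem e).1 he
    rw [hpg]
  · obtain ⟨a, rfl⟩ := hqg.2 b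
    refine ⟨g a, by simp, ?_⟩
    rintro e ⟨hq, he⟩
    obtain ⟨a', rfl⟩ := (hmem e).1 he
    rw [hqg.1 hq]

variable [Fintype E] [DecidableEq α] [DecidableEq β]

def IsFractionalPerfectMatching (θ : E → ℝ) : Prop :=
  0 ≤ θ ∧ FiberSumsEqOne p θ ∧ FiberSumsEqOne q θ

lemma convex_setOf_isFractionalPerfectMatching :
    Convex ℝ {θ | IsFractionalPerfectMatching p q θ} :=
  (convex_Ici 0).inter (convex_setOf_fiberSumsEqOne.inter convex_setOf_fiberSumsEqOne)

variable {p q} {θ m : E → ℝ}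

lemma IsBipartitePerfectMatching.isFractionalPerfectMatching
    (hm : IsBipartitePerfectMatching p q m) : IsFractionalPerfectMatching p q m :=
  ⟨fun e => by rcases hm.1 e with h | h <;> simp [h],
    fiberSumsEqOne_of_existsUnique hm.1 hm.2.1, fiberSumsEqOne_of_existsUnique hm.1 hm.2.2⟩

lemma IsFractionalPerfectMatching.card_le_card_biUnion (h : IsFractionalPerfectMatching p q θ)
    (s : Finset α) :
    #s ≤ #(s.biUnion fun a => ({e | p e = a ∧ θ e ≠ 0} : Finset E).image q) := by
  set N := s.biUnion fun a => ({e | p e = a ∧ θ e ≠ 0} : Finset E).image q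
  have hN : ∀ e, p e ∈ s → θ e ≠ 0 → q e ∈ N := fun e hs hθ =>
    mem_biUnion.2 ⟨p e, hs, mem_image_of_mem q (by simp [hθ])⟩
  suffices (#s : ℝ) ≤ #N by exact_mod_cast this
  calc (#s : ℝ) = ∑ e ∈ univ with p e ∈ s, θ e := (h.2.1.sum_filter_mem s).symm
    _ = ∑ e ∈ {e | p e ∈ s} with θ e ≠ 0, θ e := (sum_filter_ne_zero _).symm
    _ ≤ ∑ e ∈ univ with q e ∈ N, θ e :=
      sum_le_sum_of_subset_of_nonneg (fun e he => by simp_all) fun e _ _ => h.1 e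
    _ = #N := h.2.2.sum_filter_mem N

lemma IsFractionalPerfectMatching.exists_section [Fintype α] [Fintype β]
    (h : IsFractionalPerfectMatching p q θ) :
    ∃ g : α → E, (∀ a, p (g a) = a) ∧ (q ∘ g).Bijective ∧ ∀ a, θ (g a) ≠ 0 := by
  obtain ⟨f, hf, hfN⟩ :=
    (all_card_le_biUnion_card_iff_exists_injective _).1 h.card_le_card_biUnion
  have hcard : Fintype.card α = Fintype.card β := by
    exact_mod_cast h.2.1.sum_eq_card.symm.trans h.2.2.sum_eq_card
  have hedge (a : α) : ∃ e, (p e = a ∧ θ e ≠ 0) ∧ q e = f a := by simpa using hfN a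
  choose g hg hqg using hedge
  refine ⟨g, fun a => (hg a).1, ?_, fun a => (hg a).2⟩
  rw [show q ∘ g = f from funext hqg]
  exact (Fintype.bijective_iff_injective_and_card f).2 ⟨hf, hcard⟩

lemma IsFractionalPerfectMatching.exists_isBipartitePerfectMatching_support_subset
    [Fintype α] [Fintype β] (h : IsFractionalPerfectMatching p q θ) :
    ∃ m, IsBipartitePerfectMatching p q m ∧ Function.support m ⊆ Function.support θ := by
  obtain ⟨g, hpg, hqg, hθg⟩ := h.exists_section
  refine ⟨_, isBipartitePerfectMatching_indicator_range hpg hqg, ?_⟩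
  rw [Set.support_indicator]
  rintro _ ⟨⟨a, rfl⟩, -⟩
  exact hθg a

lemma IsFractionalPerfectMatching.exists_mem_segment (hθ : IsFractionalPerfectMatching p q θ)
    (hm : IsBipartitePerfectMatching p q m) (hsupp : Function.support m ⊆ Function.support θ)
    (hne : θ ≠ m) :
    ∃ θ', IsFractionalPerfectMatching p q θ' ∧ Function.support θ' ⊂ Function.support θ ∧
      θ ∈ segment ℝ m θ' := by
  obtain ⟨e, -⟩ := Function.ne_iff.1 hne
  have hmatched : ({e | m e = 1} : Finset E).Nonempty := by
    obtain ⟨e₁, ⟨-, he₁⟩, -⟩ := hm.2.1 (p e)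
    exact ⟨e₁, by simpa using he₁⟩
  obtain ⟨e₁, he₁, hmin⟩ := exists_min_image _ θ hmatched
  set t := θ e₁
  have hm₁ : m e₁ = 1 := by simpa using he₁
  have ht₀ : 0 < t := (hθ.1 e₁).lt_of_ne' (hsupp (by simp [hm₁]))
  have hle : t • m ≤ θ := fun e => by
    rcases hm.1 e with h | h
    · simpa [h] using hθ.1 e
    · simpa [h] using hmin e (by simpa using h)
  have hmθ := hm.isFractionalPerfectMatching
  have ht₁ : t < 1 := (hθ.2.1.le_one hθ.1 e₁).lt_of_ne fun ht =>
    hne (hθ.2.1.eq_of_le hmθ.2.1 (by rwa [show t = 1 from ht, one_smul] at hle))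
  refine ⟨(1 - t)⁻¹ • (θ - t • m),
    ⟨?_, hθ.2.1.smul_sub hmθ.2.1 ht₁.ne, hθ.2.2.smul_sub hmθ.2.2 ht₁.ne⟩,
    Set.ssubset_iff_exists.2 ⟨?_, e₁, ht₀.ne', ?_⟩,
    ⟨t, 1 - t, ht₀.le, by linarith, by ring, ?_⟩⟩
  · exact smul_nonneg (inv_nonneg.2 (by linarith)) (sub_nonneg.2 hle)
  · intro e he hθe
    have hme : m e = 0 := by_contra fun h => hsupp h hθe
    exact he (by simp [hθe, hme])
  · simp [hm₁, t]
  · rw [smul_smul, mul_inv_cancel₀ (by linarith), one_smul, add_sub_cancel]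

theorem IsFractionalPerfectMatching.mem_convexHull [Fintype α] [Fintype β] {θ : E → ℝ}
    (h : IsFractionalPerfectMatching p q θ) :
    θ ∈ convexHull ℝ {m | IsBipartitePerfectMatching p q m} := by
  obtain ⟨m, hm, hsupp⟩ := h.exists_isBipartitePerfectMatching_support_subset
  by_cases hθm : θ = m
  · exact subset_convexHull ℝ _ (hθm ▸ hm)
  obtain ⟨θ', h', hlt, hseg⟩ := h.exists_mem_segment hm hsupp hθm
  have hm' := subset_convexHull ℝ {m | IsBipartitePerfectMatching p q m} hm
  exact (convex_convexHull ℝ _).segment_subset hm'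
    (IsFractionalPerfectMatching.mem_convexHull h') hseg
termination_by (Function.support θ).ncard
decreasing_by exact Set.ncard_lt_ncard hlt

variable (p q) in
theorem convexHull_setOf_isBipartitePerfectMatching [Fintype α] [Fintype β] :
    convexHull ℝ {m | IsBipartitePerfectMatching p q m} =
      {θ | IsFractionalPerfectMatching p q θ} :=
  (convexHull_min (fun _ hm => hm.isFractionalPerfectMatching)
    (convex_setOf_isFractionalPerfectMatching p q)).antisymm fun _ h => h.mem_convexHull

end Bipartite

section Quotient

variable (s : Setoid E)

lemma forall_existsUnique_quotientMk_iff (P : E → Prop) :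
    (∀ c : Quotient s, ∃! e, Quotient.mk s e = c ∧ P e) ↔ ∀ e, ∃! e', s e e' ∧ P e' := by
  simp only [Quotient.forall, Quotient.eq, s.comm']

lemma forall_sum_filter_quotientMk_iff [Fintype E] [DecidableRel s]
    [DecidableEq (Quotient s)] (θ : E → ℝ) :
    (∀ c : Quotient s, ∑ e ∈ univ with Quotient.mk s e = c, θ e = 1) ↔
      ∀ e, ∑ e' ∈ univ with s e e', θ e' = 1 := by
  simp only [Quotient.forall, Quotient.eq, s.comm']

end Quotient

/-- The convex hull of the (indicator vectors of the) perfect matchings of `(E, σ₀, σ₁)`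
is exactly the set of nonnegative functions `θ : E → ℝ` whose sum over every cycle of `σ₀`
and over every cycle of `σ₁` equals `1`. -/
theorem convexHull_perfectMatchings_eq_fractionalMatchings
    [Fintype E] [DecidableEq E] (σ₀ σ₁ : Equiv.Perm E) :
    convexHull ℝ {m : E → ℝ | IsPerfectMatching σ₀ σ₁ m} =
      {θ : E → ℝ | (∀ e, 0 ≤ θ e) ∧
        (∀ e : E, ∑ e' ∈ univ.filter (fun e' => σ₀.SameCycle e e'), θ e' = 1) ∧
        (∀ e : E, ∑ e' ∈ univ.filter (fun e' => σ₁.SameCycle e e'), θ e' = 1)} := by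
  classical
  have key := convexHull_setOf_isBipartitePerfectMatching
    (Quotient.mk (Equiv.Perm.SameCycle.setoid σ₀))
    (Quotient.mk (Equiv.Perm.SameCycle.setoid σ₁))
  simp only [IsBipartitePerfectMatching, IsFractionalPerfectMatching, FiberSumsEqOne,
    forall_existsUnique_quotientMk_iff, forall_sum_filter_quotientMk_iff] at key
  convert key using 3
  · rfl
  · rw [Pi.le_def]
    congr!
end

section
/- The set of extreme points (vertices) of the matching polytope is precisely the set of indicator vectors of perfect matchings: with E a finite set and σ₀, σ₁ permutations of E, a point θ of the polytope {θ : E → ℝ | θ ≥ 0 and every σ₀-cycle sum and every σ₁-cycle sum of θ equals 1} is an extreme point of this polytope if and only if θ is the indicator vector of a perfect matching. -/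
/-!
A point `θ` of the polytope with a coordinate in `(0, 1)` is not extreme. Let `F` be the set of
such coordinates. A cycle of `σ₀` or `σ₁` through a point of `F` sums to `1`, so it contains a
second point of `F`; hence the sets `C₀`, `C₁` of cycles meeting `F` satisfy `|C₀| + |C₁| ≤ |F|`.
The cycle sums of a function supported on `F` satisfy one linear relation (both families add up
to its total), so they span at most `|C₀| + |C₁| - 1 < |F|` dimensions, and some nonzero `D`
supported on `F` has all cycle sums zero. Then `θ ± εD` lie in the polytope for small `ε`.

Conversely, a `0/1`-valued point is a vertex of the cube `[0, 1]^E`, which contains the polytope,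
and it is a perfect matching because every cycle sums to `1`.
-/

open Finset

variable {E : Type*}

/-- The matching polytope: nonnegative functions `θ : E → ℝ` whose sum over every
cycle of `σ₀` and over every cycle of `σ₁` equals `1`. -/
def matchingPolytope [Fintype E] [DecidableEq E] (σ₀ σ₁ : Equiv.Perm E) : Set (E → ℝ) :=
  {θ | (∀ e, 0 ≤ θ e) ∧
    (∀ e : E, ∑ e' ∈ univ.filter (fun e' => σ₀.SameCycle e e'), θ e' = 1) ∧
    (∀ e : E, ∑ e' ∈ univ.filter (fun e' => σ₁.SameCycle e e'), θ e' = 1)}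

lemma Finset.two_mul_card_image_le_card {α β : Type*} [DecidableEq β] {s : Finset α} {p : α → β}
    (hp : ∀ i ∈ s, ∃ j ∈ s, j ≠ i ∧ p j = p i) : 2 * #(s.image p) ≤ #s := by
  rw [card_eq_sum_card_image p s, mul_comm, ← smul_eq_mul, ← sum_const]
  refine sum_le_sum fun k hk => ?_
  obtain ⟨i, hi, rfl⟩ := mem_image.1 hk
  obtain ⟨j, hj, hji, hpj⟩ := hp i hi
  exact one_lt_card.2 ⟨i, by simp [hi], j, by simp [hj, hpj], hji.symm⟩

section FiberSums

variable (K : Type*) {ι κ κ₀ κ₁ : Type*} [Field K] [Fintype ι] [DecidableEq κ]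

def fiberSum (p : ι → κ) : (ι → K) →ₗ[K] κ → K :=
  LinearMap.pi fun k => ∑ i with p i = k, LinearMap.proj i

variable {K}

@[simp]
lemma fiberSum_apply (p : ι → κ) (d : ι → K) (k : κ) :
    fiberSum K p d k = ∑ i with p i = k, d i := by
  simp [fiberSum]

lemma fiberSum_comp {κ' : Type*} [Fintype κ] [DecidableEq κ'] (g : κ → κ') (p : ι → κ) :
    fiberSum K (g ∘ p) = fiberSum K g ∘ₗ fiberSum K p := by
  ext d k'
  simp only [LinearMap.comp_apply, fiberSum_apply, Function.comp_apply]
  rw [← sum_fiberwise_of_maps_to (t := {k | g k = k'}) (g := p) (by simp)]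
  refine sum_congr rfl fun k hk => ?_
  rw [filter_filter]
  exact sum_congr (filter_congr fun i _ => by grind) fun _ _ => rfl

lemma fiberSum_apply_apply_of_injective {p : ι → κ} (hp : p.Injective) (d : ι → K) (i : ι) :
    fiberSum K p d (p i) = d i := by
  rw [fiberSum_apply, sum_eq_single_of_mem i (by simp)
    fun j hj hji => (hji (hp (mem_filter.1 hj).2)).elim]

lemma fiberSum_apply_eq_zero {p : ι → κ} {k : κ} (hk : k ∉ Set.range p) (d : ι → K) :
    fiberSum K p d k = 0 :=
  (fiberSum_apply p d k).trans <| sum_eq_zero fun i hi => absurd ⟨i, (mem_filter.1 hi).2⟩ hk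

lemma exists_ne_zero_fiberSum_eq_zero_of_card_le [Fintype κ₀] [Fintype κ₁]
    [DecidableEq κ₀] [DecidableEq κ₁] [Nonempty κ₀] (p : ι → κ₀) (q : ι → κ₁)
    (hcard : Fintype.card κ₀ + Fintype.card κ₁ ≤ Fintype.card ι) :
    ∃ d : ι → K, d ≠ 0 ∧ fiberSum K p d = 0 ∧ fiberSum K q d = 0 := by
  let L := (fiberSum K p).prod (fiberSum K q)
  let f : ((κ₀ → K) × (κ₁ → K)) →ₗ[K] K :=
    (∑ k, LinearMap.proj k) ∘ₗ LinearMap.fst K _ _ - (∑ k, LinearMap.proj k) ∘ₗ LinearMap.snd K _ _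
  -- both families of fibre sums of `d` add up to `∑ i, d i`
  have hfL : ∀ d, L d ∈ LinearMap.ker f := fun d => by
    simp [f, L, sum_fiberwise]
  have hf : LinearMap.ker f ≠ ⊤ := by
    rw [Ne, LinearMap.ker_eq_top]
    intro h
    simpa [f] using LinearMap.congr_fun h (Pi.single (Classical.arbitrary κ₀) 1, 0)
  have hker : LinearMap.ker (L.codRestrict _ hfL) ≠ ⊥ := by
    refine LinearMap.ker_ne_bot_of_finrank_lt ((Submodule.finrank_lt hf).trans_le ?_)
    simpa using hcard
  obtain ⟨d, hd, hd0⟩ := Submodule.exists_mem_ne_zero_of_ne_bot hker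
  rw [LinearMap.ker_codRestrict, LinearMap.mem_ker, LinearMap.prod_apply, Prod.mk_eq_zero] at hd
  exact ⟨d, hd0, hd⟩

lemma exists_ne_zero_fiberSum_eq_zero [DecidableEq ι] [DecidableEq κ₀] [DecidableEq κ₁]
    {s : Finset ι} (hs : s.Nonempty) {p : ι → κ₀} {q : ι → κ₁}
    (hp : ∀ i ∈ s, ∃ j ∈ s, j ≠ i ∧ p j = p i) (hq : ∀ i ∈ s, ∃ j ∈ s, j ≠ i ∧ q j = q i) :
    ∃ d : ι → K, d ≠ 0 ∧ (∀ i ∉ s, d i = 0) ∧ fiberSum K p d = 0 ∧ fiberSum K q d = 0 := by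
  let p' : s → s.image p := fun i => ⟨p i, mem_image_of_mem p i.2⟩
  let q' : s → s.image q := fun i => ⟨q i, mem_image_of_mem q i.2⟩
  have : Nonempty (s.image p) := (hs.image p).to_subtype
  obtain ⟨d, hd0, hdp, hdq⟩ := exists_ne_zero_fiberSum_eq_zero_of_card_le (K := K) p' q' (by
    simp only [Fintype.card_coe]
    linarith [two_mul_card_image_le_card hp, two_mul_card_image_le_card hq])
  -- the fibre sum along the inclusion `s → ι` extends `d` by zero
  refine ⟨fiberSum K (↑) d, ?_, fun i hi => fiberSum_apply_eq_zero (by simpa using hi) d, ?_, ?_⟩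
  · contrapose! hd0
    ext i
    simpa [fiberSum_apply_apply_of_injective Subtype.val_injective] using congrFun hd0 i
  · rw [← LinearMap.comp_apply, ← fiberSum_comp,
      show p ∘ (↑) = ((↑) : s.image p → κ₀) ∘ p' from rfl, fiberSum_comp, LinearMap.comp_apply,
      hdp, map_zero]
  · rw [← LinearMap.comp_apply, ← fiberSum_comp,
      show q ∘ (↑) = ((↑) : s.image q → κ₁) ∘ q' from rfl, fiberSum_comp, LinearMap.comp_apply,
      hdq, map_zero]

end FiberSums

lemma exists_ne_mem_Ioo_of_sum_eq_one {R α : Type*} [CommRing R] [LinearOrder R]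
    [IsStrictOrderedRing R] [DecidableEq α] {s : Finset α} {θ : α → R} (hθ : ∀ j ∈ s, 0 ≤ θ j)
    (hs : ∑ j ∈ s, θ j = 1) {i : α} (hi : i ∈ s) (hθi : θ i ∈ Set.Ioo 0 1) :
    ∃ j ∈ s, j ≠ i ∧ θ j ∈ Set.Ioo 0 1 := by
  have hrest : ∑ j ∈ s.erase i, θ j = 1 - θ i := by
    rw [← hs, ← add_sum_erase s θ hi, add_sub_cancel_left]
  obtain ⟨j, hj, hj0⟩ : ∃ j ∈ s.erase i, 0 < θ j := by
    by_contra! h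
    linarith [sum_nonpos h, hθi.2]
  refine ⟨j, mem_of_mem_erase hj, ne_of_mem_erase hj, hj0, ?_⟩
  calc θ j ≤ ∑ j ∈ s.erase i, θ j := single_le_sum (fun k hk => hθ k (mem_of_mem_erase hk)) hj
    _ = 1 - θ i := hrest
    _ < 1 := by linarith [hθi.1]

lemma existsUnique_eq_one_of_sum_eq_one {R α : Type*} [AddCommMonoidWithOne R] [CharZero R]
    {s : Finset α} {θ : α → R} (h01 : ∀ i ∈ s, θ i = 0 ∨ θ i = 1) (hs : ∑ i ∈ s, θ i = 1) :
    ∃! i, i ∈ s ∧ θ i = 1 := by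
  classical
  have hcard : #{i ∈ s | θ i = 1} = 1 := by
    have : ∑ i ∈ s, θ i = #{i ∈ s | θ i = 1} := by
      rw [← sum_boole]
      exact sum_congr rfl fun i hi => by rcases h01 i hi with h | h <;> simp [h]
    exact_mod_cast this ▸ hs
  obtain ⟨a, ha⟩ := card_eq_one.1 hcard
  exact ⟨a, mem_filter.1 (ha ▸ mem_singleton_self a),
    fun b hb => mem_singleton.1 (ha ▸ mem_filter.2 hb)⟩

open Filter Topology in
lemma eventually_nonneg_add_mul {ι : Type*} [Finite ι] {θ D : ι → ℝ} (hθ : ∀ i, 0 ≤ θ i)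
    (hD : ∀ i, θ i = 0 → D i = 0) : ∀ᶠ t in 𝓝 (0 : ℝ), ∀ i, 0 ≤ θ i + t * D i := by
  refine eventually_all.2 fun i => ?_
  rcases (hθ i).eq_or_lt with h | h
  · simp [← h, hD i h.symm]
  · have : Tendsto (fun t => θ i + t * D i) (𝓝 0) (𝓝 (θ i)) :=
      (show Continuous fun t => θ i + t * D i by fun_prop).tendsto' 0 _ (by simp)
    exact (this.eventually (lt_mem_nhds h)).mono fun _ => le_of_lt

open Filter Topology in
lemma notMem_extremePoints_of_eventually_add_smul_mem {V : Type*} [AddCommGroup V] [Module ℝ V]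
    {A : Set V} {x v : V} (hv : v ≠ 0) (h : ∀ᶠ t in 𝓝 (0 : ℝ), x + t • v ∈ A) :
    x ∉ A.extremePoints ℝ := by
  intro hx
  have h' : ∀ᶠ t in 𝓝 (0 : ℝ), x + (-t) • v ∈ A := by
    simpa using (continuous_neg.tendsto' (0 : ℝ) 0 neg_zero).eventually h
  obtain ⟨t, ⟨h₁, h₂⟩, ht⟩ :=
    (((h.and h').filter_mono nhdsWithin_le_nhds).and (self_mem_nhdsWithin (s := Set.Ioi 0))).exists
  have hseg : x ∈ openSegment ℝ (x + t • v) (x + (-t) • v) :=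
    ⟨1 / 2, 1 / 2, by norm_num, by norm_num, by norm_num, by module⟩
  have hxt : x + t • v = x := ((mem_extremePoints.1 hx).2 _ h₁ _ h₂ hseg).1
  exact hv ((smul_eq_zero.1 (add_eq_left.1 hxt)).resolve_left ht.ne')

namespace Equiv.Perm

variable [Fintype E] [DecidableEq E] {σ : Perm E}

def sameCycleFinset (σ : Perm E) (e : E) : Finset E := {e' | σ.SameCycle e e'}

@[simp]
lemma mem_sameCycleFinset {e e' : E} : e' ∈ σ.sameCycleFinset e ↔ σ.SameCycle e e' := by
  simp [sameCycleFinset]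

lemma sameCycleFinset_eq_iff {e e' : E} :
    σ.sameCycleFinset e' = σ.sameCycleFinset e ↔ σ.SameCycle e e' := by
  refine ⟨fun h => mem_sameCycleFinset.1 (h ▸ mem_sameCycleFinset.2 (.refl σ e')), fun h => ?_⟩
  ext x
  simp only [mem_sameCycleFinset]
  exact ⟨h.trans, h.symm.trans⟩

lemma fiberSum_sameCycleFinset {K : Type*} [Field K] (d : E → K) (e : E) :
    fiberSum K σ.sameCycleFinset d (σ.sameCycleFinset e) = ∑ e' ∈ σ.sameCycleFinset e, d e' := by
  rw [fiberSum_apply]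
  congr 1
  ext e'
  simp [sameCycleFinset_eq_iff]

end Equiv.Perm

section MatchingPolytope

open Equiv.Perm

variable [Fintype E] [DecidableEq E] {σ₀ σ₁ : Equiv.Perm E} {θ : E → ℝ}

lemma le_one_of_mem_matchingPolytope (hθ : θ ∈ matchingPolytope σ₀ σ₁) (e : E) : θ e ≤ 1 :=
  (single_le_sum (fun i _ => hθ.1 i) (mem_sameCycleFinset.2 (.refl σ₀ e))).trans_eq (hθ.2.1 e)

lemma add_smul_mem_matchingPolytope {D : E → ℝ} {t : ℝ} (hθ : θ ∈ matchingPolytope σ₀ σ₁)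
    (hD₀ : fiberSum ℝ σ₀.sameCycleFinset D = 0) (hD₁ : fiberSum ℝ σ₁.sameCycleFinset D = 0)
    (hnonneg : ∀ e, 0 ≤ θ e + t * D e) : θ + t • D ∈ matchingPolytope σ₀ σ₁ := by
  have hsum (σ : Equiv.Perm E) (hD : fiberSum ℝ σ.sameCycleFinset D = 0)
      (hθσ : ∀ e, ∑ e' ∈ σ.sameCycleFinset e, θ e' = 1) (e : E) :
      ∑ e' ∈ σ.sameCycleFinset e, (θ + t • D) e' = 1 := by
    have hDe := congrFun hD (σ.sameCycleFinset e)
    rw [fiberSum_sameCycleFinset] at hDe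
    simp [sum_add_distrib, ← mul_sum, hDe, hθσ e]
  exact ⟨hnonneg, hsum σ₀ hD₀ hθ.2.1, hsum σ₁ hD₁ hθ.2.2⟩

lemma eq_zero_or_eq_one_of_mem_extremePoints_matchingPolytope
    (hθ : θ ∈ (matchingPolytope σ₀ σ₁).extremePoints ℝ) (e : E) : θ e = 0 ∨ θ e = 1 := by
  have hP : θ ∈ matchingPolytope σ₀ σ₁ := hθ.1
  by_contra! he
  let F : Finset E := {i | θ i ∈ Set.Ioo 0 1}
  have hpartner (σ : Equiv.Perm E) (hσ : ∀ e, ∑ e' ∈ σ.sameCycleFinset e, θ e' = 1) :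
      ∀ i ∈ F, ∃ j ∈ F, j ≠ i ∧ σ.sameCycleFinset j = σ.sameCycleFinset i := by
    intro i hi
    obtain ⟨j, hj, hji, hθj⟩ := exists_ne_mem_Ioo_of_sum_eq_one (fun j _ => hP.1 j) (hσ i)
      (mem_sameCycleFinset.2 (.refl σ i)) (mem_filter.1 hi).2
    exact ⟨j, by simpa [F] using hθj, hji, sameCycleFinset_eq_iff.2 (mem_sameCycleFinset.1 hj)⟩
  have hfrac : θ e ∈ Set.Ioo 0 1 :=
    ⟨(hP.1 e).lt_of_ne' he.1, (le_one_of_mem_matchingPolytope hP e).lt_of_ne he.2⟩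
  obtain ⟨D, hD, hDF, hD₀, hD₁⟩ := exists_ne_zero_fiberSum_eq_zero (K := ℝ)
    ⟨e, by simpa [F] using hfrac⟩ (hpartner σ₀ hP.2.1) (hpartner σ₁ hP.2.2)
  refine notMem_extremePoints_of_eventually_add_smul_mem hD ?_ hθ
  filter_upwards [eventually_nonneg_add_mul hP.1 fun i hi => hDF i (by simp [F, hi])] with t ht
  exact add_smul_mem_matchingPolytope hP hD₀ hD₁ ht

lemma mem_extremePoints_matchingPolytope_of_eq_zero_or_eq_one (hθ : θ ∈ matchingPolytope σ₀ σ₁)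
    (h01 : ∀ e, θ e = 0 ∨ θ e = 1) : θ ∈ (matchingPolytope σ₀ σ₁).extremePoints ℝ := by
  have hcube : matchingPolytope σ₀ σ₁ ⊆ Set.univ.pi fun _ => Set.Icc 0 1 :=
    fun x hx e _ => ⟨hx.1 e, le_one_of_mem_matchingPolytope hx e⟩
  refine inter_extremePoints_subset_extremePoints_of_subset hcube ⟨hθ, ?_⟩
  rw [extremePoints_pi, Set.extremePoints_Icc zero_le_one]
  exact fun e _ => h01 e

lemma IsPerfectMatching.of_mem_matchingPolytope (hθ : θ ∈ matchingPolytope σ₀ σ₁)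
    (h01 : ∀ e, θ e = 0 ∨ θ e = 1) : IsPerfectMatching σ₀ σ₁ θ :=
  ⟨h01, fun e => by simpa using existsUnique_eq_one_of_sum_eq_one (fun i _ => h01 i) (hθ.2.1 e),
    fun e => by simpa using existsUnique_eq_one_of_sum_eq_one (fun i _ => h01 i) (hθ.2.2 e)⟩

end MatchingPolytope

/-- A point of the matching polytope is an extreme point of the matching polytope
if and only if it is the indicator vector of a perfect matching. -/
theorem extremePoint_matchingPolytope_iff_perfectMatching
    [Fintype E] [DecidableEq E] (σ₀ σ₁ : Equiv.Perm E)
    (θ : E → ℝ) (hθ : θ ∈ matchingPolytope σ₀ σ₁) :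
    θ ∈ Set.extremePoints ℝ (matchingPolytope σ₀ σ₁) ↔ IsPerfectMatching σ₀ σ₁ θ :=
  ⟨fun h => .of_mem_matchingPolytope hθ (eq_zero_or_eq_one_of_mem_extremePoints_matchingPolytope h),
    fun h => mem_extremePoints_matchingPolytope_of_eq_zero_or_eq_one hθ h.1⟩
end

section
/- Entry description of ρ_m: let E be a finite set, σ a permutation of E, m : E → {0,1} with exactly one value 1 on each cycle of σ, ς_m the E×E matrix with (e',e)-entry 1 if e' = σ(e) and m(e) = 0 and 0 otherwise, and ρ_m := (I − ς_m)^{-1}. Then for all e, e' ∈ E the (e',e)-entry of ρ_m equals 1 if there exists k ≥ 0 with e' = σ^k(e) and m(σ^j(e)) = 0 for all 0 ≤ j < k, and equals 0 otherwise; in particular all entries of ρ_m lie in {0,1}. -/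
open Finset Matrix
open scoped Classical

variable {E : Type*}

/-- The "broken" permutation matrix `ς_m`: the matrix of the permutation `σ`
(with `(σ e, e)`-entry `1`) in which every column `e` with `m e = 1` is replaced by zero. -/
def brokenPermMatrix [DecidableEq E] (σ : Equiv.Perm E) (m : E → ℤ) : Matrix E E ℤ :=
  Matrix.of fun e' e => if e' = σ e ∧ m e = 0 then 1 else 0

/-- The matrix `ρ_m = (I - ς_m)⁻¹`. -/
noncomputable def rhoMatrix [Fintype E] [DecidableEq E] (σ : Equiv.Perm E) (m : E → ℤ) :
    Matrix E E ℤ :=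
  (1 - brokenPermMatrix σ m)⁻¹

/-!
Let `R` be the `0/1` matrix with `R e' e = 1` iff `e'` is reached from `e` by iterating `σ`
through zeros of `m`. A nontrivial such path to `e'` ends with a step from `σ⁻¹ e'`, where
`m` vanishes, so `R = 1 + ς_m R`; the two summands never overlap at a diagonal entry, since
a path from `e` back to `e` through zeros of `m` would exhaust a cycle of `σ` on which `m`
vanishes identically. Hence `(1 - ς_m) R = 1`, i.e. `ρ_m = R`.
-/

theorem Equiv.Perm.SameCycle.of_forall_lt_period {α : Type*} {σ : Equiv.Perm α} {p : α → Prop}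
    {x y : α} {k : ℕ} (hk : 0 < k) (hx : (σ ^ k) x = x) (hp : ∀ j < k, p ((σ ^ j) x))
    (hy : σ.SameCycle x y) : p y := by
  obtain ⟨i, rfl⟩ := hy
  have hper : ((σ ^ k) ^ (i / k)) x = x := Equiv.Perm.zpow_apply_eq_self_of_apply_eq_self hx _
  have hmod : 0 ≤ i % k ∧ i % k < k :=
    ⟨Int.emod_nonneg _ (by omega), Int.emod_lt_of_pos _ (by omega)⟩
  have hi : (σ ^ i) x = (σ ^ (i % k).toNat) x := by
    conv_lhs => rw [← Int.emod_add_mul_ediv i k, _root_.zpow_add, _root_.zpow_mul, zpow_natCast,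
      Equiv.Perm.mul_apply, hper]
    rw [← zpow_natCast, Int.toNat_of_nonneg hmod.1]
  rw [hi]
  exact hp _ (by omega)

namespace BrokenPerm

variable (σ : Equiv.Perm E) (m : E → ℤ)

def Reaches (e e' : E) : Prop :=
  ∃ k : ℕ, e' = (σ ^ k) e ∧ ∀ j < k, m ((σ ^ j) e) = 0

variable {σ m}

lemma symm_eq_pow_apply_iff {e e' : E} {k : ℕ} :
    σ.symm e' = (σ ^ k) e ↔ e' = (σ ^ (k + 1)) e := by
  rw [Equiv.symm_apply_eq, pow_succ', Equiv.Perm.mul_apply]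

lemma reaches_iff {e e' : E} :
    Reaches σ m e e' ↔ e' = e ∨ (m (σ.symm e') = 0 ∧ Reaches σ m e (σ.symm e')) := by
  constructor
  · rintro ⟨_ | k, hk, hz⟩
    · exact Or.inl hk
    · have hk' : σ.symm e' = (σ ^ k) e := symm_eq_pow_apply_iff.mpr hk
      exact Or.inr ⟨hk' ▸ hz k k.lt_succ_self, k, hk',
        fun j hj => hz j (hj.trans k.lt_succ_self)⟩
  · rintro (rfl | ⟨hz, k, hk, hzk⟩)
    · exact ⟨0, rfl, by simp⟩
    · refine ⟨k + 1, symm_eq_pow_apply_iff.mp hk, fun j hj => ?_⟩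
      rcases Nat.lt_succ_iff_lt_or_eq.mp hj with hj | rfl
      · exact hzk j hj
      · exact hk ▸ hz

lemma not_reaches_symm_self (hm : ∀ e, ∃ e', σ.SameCycle e e' ∧ m e' ≠ 0) {e : E}
    (hz : m (σ.symm e) = 0) : ¬ Reaches σ m e (σ.symm e) := by
  rintro ⟨k, hk, hzk⟩
  obtain ⟨e', hc, hne⟩ := hm e
  refine hne (hc.of_forall_lt_period (p := fun x => m x = 0) k.succ_pos
    (symm_eq_pow_apply_iff.mp hk).symm fun j hj => ?_)
  rcases Nat.lt_succ_iff_lt_or_eq.mp hj with hj | rfl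
  · exact hzk j hj
  · exact hk ▸ hz

variable (σ m) in
noncomputable def reachMatrix : Matrix E E ℤ :=
  Matrix.of fun e' e => if Reaches σ m e e' then 1 else 0

lemma brokenPermMatrix_mul_apply [Fintype E] [DecidableEq E] (A : Matrix E E ℤ) (e' e : E) :
    (brokenPermMatrix σ m * A) e' e = if m (σ.symm e') = 0 then A (σ.symm e') e else 0 := by
  rw [Matrix.mul_apply, Finset.sum_eq_single (σ.symm e')]
  · by_cases h : m (σ.symm e') = 0 <;> simp [brokenPermMatrix, h]
  · intro x _ hx
    have hne : e' ≠ σ x := fun h => hx (by simp [h])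
    simp [brokenPermMatrix, hne]
  · simp

lemma reachMatrix_eq_one_add [Fintype E] [DecidableEq E]
    (hm : ∀ e, ∃ e', σ.SameCycle e e' ∧ m e' ≠ 0) :
    reachMatrix σ m = 1 + brokenPermMatrix σ m * reachMatrix σ m := by
  ext e' e
  rw [Matrix.add_apply, brokenPermMatrix_mul_apply, Matrix.one_apply]
  simp only [reachMatrix, Matrix.of_apply]
  rw [reaches_iff]
  by_cases he : e' = e
  · subst he
    by_cases hz : m (σ.symm e') = 0 <;> simp [hz, not_reaches_symm_self hm]
  · by_cases hz : m (σ.symm e') = 0 <;> simp [he, hz]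

lemma rhoMatrix_eq_reachMatrix [Fintype E] [DecidableEq E]
    (hm : ∀ e, ∃ e', σ.SameCycle e e' ∧ m e' ≠ 0) : rhoMatrix σ m = reachMatrix σ m :=
  Matrix.inv_eq_right_inv <| by
    rw [sub_mul, one_mul]
    exact sub_eq_of_eq_add (reachMatrix_eq_one_add hm)

end BrokenPerm

theorem rhoMatrix_entries_general [Fintype E] [DecidableEq E]
    (σ : Equiv.Perm E) (m : E → ℤ)
    (hm : ∀ e, ∃! e', σ.SameCycle e e' ∧ m e' = 1) :
    (∀ e e' : E, rhoMatrix σ m e' e =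
      if ∃ k : ℕ, e' = (σ ^ k) e ∧ ∀ j < k, m ((σ ^ j) e) = 0 then 1 else 0) ∧
    (∀ e e' : E, rhoMatrix σ m e' e = 0 ∨ rhoMatrix σ m e' e = 1) := by
  have hm' : ∀ e, ∃ e', σ.SameCycle e e' ∧ m e' ≠ 0 := fun e =>
    let ⟨e', ⟨hc, h1⟩, _⟩ := hm e
    ⟨e', hc, h1 ▸ one_ne_zero⟩
  rw [BrokenPerm.rhoMatrix_eq_reachMatrix hm']
  refine ⟨fun e e' => rfl, fun e e' => ?_⟩
  by_cases h : BrokenPerm.Reaches σ m e e' <;> simp [BrokenPerm.reachMatrix, h]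

/-- Entry description of `ρ_m = (I - ς_m)⁻¹`: its `(e', e)`-entry is `1` exactly when `e'`
can be reached from `e` by iterating `σ` without first passing an element where `m` is `1`,
and is `0` otherwise; in particular all entries of `ρ_m` lie in `{0,1}`. -/
theorem rhoMatrix_entries [Fintype E] [DecidableEq E]
    (σ : Equiv.Perm E) (m : E → ℤ)
    (hm01 : ∀ e, m e = 0 ∨ m e = 1)
    (hm : ∀ e, ∃! e', σ.SameCycle e e' ∧ m e' = 1) :
    (∀ e e' : E, rhoMatrix σ m e' e =
      if ∃ k : ℕ, e' = (σ ^ k) e ∧ ∀ j < k, m ((σ ^ j) e) = 0 then 1 else 0) ∧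
    (∀ e e' : E, rhoMatrix σ m e' e = 0 ∨ rhoMatrix σ m e' e = 1) :=
  rhoMatrix_entries_general σ m hm
end

section
/- Symmetrization of ρ_m gives the cycle-incidence matrix: let E be a finite set, σ a permutation of E, m : E → {0,1} with exactly one value 1 on each cycle of σ, and ρ_m := (I − ς_m)^{-1} where ς_m has (e',e)-entry 1 if e' = σ(e) and m(e) = 0 and 0 otherwise. Then ρ_m + ρ_mᵀ = I + C_σ, where C_σ is the E×E matrix whose (e,e')-entry is 1 if e and e' lie in the same cycle of σ and 0 otherwise. -/
open Finset Matrix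

variable {E : Type*}

/-! Write `ς_m = P (1 - D)` with `P` the permutation matrix of `σ⁻¹`, `D = diagonal m`, and put
`A = 1 - ς_m`. The cycle-incidence matrix `C` is unchanged by `σ` acting on rows or columns,
and `D C D = D` because every cycle carries exactly one mark; together these give
`A C Aᵀ = P D Pᵀ = 1 - ς_m ς_mᵀ`, that is `A (1 + C) Aᵀ = A + Aᵀ`. A column of a power of
`ς_m` vanishes once the path it follows has passed the mark of its cycle, so `ς_m` is nilpotent,
`A` is invertible, and multiplying by `A⁻¹` on the left and by `(Aᵀ)⁻¹` on the right gives
`ρ_m + ρ_mᵀ = 1 + C`. -/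

theorem one_sub_mul_one_add_mul_one_sub {R : Type*} [Ring R] {p q c e : R}
    (hpq : p * q = 1) (hpc : p * c = c) (hcq : c * q = c) (he : IsIdempotentElem e)
    (hece : e * c * e = e) :
    (1 - p * (1 - e)) * (1 + c) * (1 - (1 - e) * q) = (1 - p * (1 - e)) + (1 - (1 - e) * q) := by
  linear_combination (norm := noncomm_ring)
    -(hpc * (1 - q + e * q)) - p * e * hcq + p * hece * q + p * he.eq * q + hpq

namespace Matrix

theorem isIdempotentElem_diagonal {n α : Type*} [Fintype n] [DecidableEq n]
    [NonUnitalNonAssocSemiring α] {d : n → α} (hd : ∀ i, IsIdempotentElem (d i)) :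
    IsIdempotentElem (diagonal d) := by
  rw [IsIdempotentElem, diagonal_mul_diagonal]
  exact congrArg diagonal (funext hd)

theorem nonsing_inv_add_nonsing_inv_of_add_eq_mul {n α : Type*} [Fintype n] [DecidableEq n]
    [CommRing α] {A B X : Matrix n n α} (hA : IsUnit A.det) (hB : IsUnit B.det)
    (h : A + B = A * X * B) : A⁻¹ + B⁻¹ = X := by
  calc A⁻¹ + B⁻¹ = A⁻¹ * (A + B) * B⁻¹ := by
        rw [Matrix.mul_add, Matrix.add_mul, nonsing_inv_mul _ hA, Matrix.mul_assoc,
          mul_nonsing_inv _ hB, Matrix.one_mul, Matrix.mul_one, add_comm]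
    _ = X := by
        rw [h, ← Matrix.mul_assoc, ← Matrix.mul_assoc, nonsing_inv_mul _ hA, Matrix.one_mul,
          Matrix.mul_assoc, mul_nonsing_inv _ hB, Matrix.mul_one]

end Matrix

section CycleIncidence

variable {R : Type*} [Fintype E] [DecidableEq E] [NonAssocSemiring R] (σ : Equiv.Perm E)

variable (R) in
def cycleIncidenceMatrix : Matrix E E R :=
  Matrix.of fun e e' => if σ.SameCycle e e' then 1 else 0

theorem inv_permMatrix_mul_cycleIncidenceMatrix :
    σ⁻¹.permMatrix R * cycleIncidenceMatrix R σ = cycleIncidenceMatrix R σ := by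
  ext a b
  simp [PEquiv.toMatrix_toPEquiv_mul, cycleIncidenceMatrix]

theorem cycleIncidenceMatrix_mul_permMatrix :
    cycleIncidenceMatrix R σ * σ.permMatrix R = cycleIncidenceMatrix R σ := by
  ext a b
  simp [PEquiv.mul_toMatrix_toPEquiv, cycleIncidenceMatrix]

theorem diagonal_mul_cycleIncidenceMatrix_mul_diagonal {m : E → R}
    (hm01 : ∀ e, m e = 0 ∨ m e = 1)
    (hm : ∀ e, ∃! e', σ.SameCycle e e' ∧ m e' = 1) :
    diagonal m * cycleIncidenceMatrix R σ * diagonal m = diagonal m := by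
  ext a b
  rw [mul_diagonal, diagonal_mul, diagonal_apply]
  split_ifs with hab
  · subst hab
    rcases hm01 a with h | h <;> simp [cycleIncidenceMatrix, h, Equiv.Perm.SameCycle.refl]
  · rcases hm01 a with ha | ha
    · simp [ha]
    rcases hm01 b with hb | hb
    · simp [hb]
    have hcyc : ¬σ.SameCycle a b := fun hcyc =>
      hab ((hm a).unique ⟨.refl σ a, ha⟩ ⟨hcyc, hb⟩)
    simp [cycleIncidenceMatrix, hcyc]

end CycleIncidence

section BrokenPermMatrix

variable [Fintype E] [DecidableEq E] (σ : Equiv.Perm E) (m : E → ℤ)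

theorem brokenPermMatrix_eq_inv_permMatrix_mul (hm01 : ∀ e, m e = 0 ∨ m e = 1) :
    brokenPermMatrix σ m = σ⁻¹.permMatrix ℤ * (1 - diagonal m) := by
  ext a b
  rw [PEquiv.toMatrix_toPEquiv_mul]
  rcases hm01 b with h | h <;> by_cases hab : a = σ b <;>
    simp [brokenPermMatrix, one_apply, h, hab, Equiv.symm_apply_eq]

theorem brokenPermMatrix_pow_succ_apply (k : ℕ) (a b : E) :
    (brokenPermMatrix σ m ^ (k + 1)) a b =
      if m b = 0 then (brokenPermMatrix σ m ^ k) a (σ b) else 0 := by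
  rw [pow_succ, mul_apply]
  by_cases h : m b = 0 <;> simp [brokenPermMatrix, h]

theorem brokenPermMatrix_pow_apply_eq_zero {j k : ℕ} (hjk : j < k) (a b : E)
    (hb : m ((σ ^ j) b) ≠ 0) : (brokenPermMatrix σ m ^ k) a b = 0 := by
  induction j generalizing k b with
  | zero =>
    obtain ⟨k, rfl⟩ := Nat.exists_eq_add_one_of_ne_zero hjk.ne'
    rw [brokenPermMatrix_pow_succ_apply, if_neg (by simpa using hb)]
  | succ j ih =>
    obtain ⟨k, rfl⟩ := Nat.exists_eq_add_one_of_ne_zero (by omega : k ≠ 0)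
    rw [brokenPermMatrix_pow_succ_apply]
    split_ifs
    · exact ih (by omega) (σ b) (by rwa [← Equiv.Perm.mul_apply, ← pow_succ])
    · rfl

theorem isNilpotent_brokenPermMatrix (hm : ∀ e, ∃ e', σ.SameCycle e e' ∧ m e' ≠ 0) :
    IsNilpotent (brokenPermMatrix σ m) := by
  refine ⟨orderOf σ, Matrix.ext fun a b => ?_⟩
  obtain ⟨e', hcyc, he'⟩ := hm b
  obtain ⟨j, hj, rfl⟩ := hcyc.exists_pow_eq'
  exact brokenPermMatrix_pow_apply_eq_zero σ m hj a b he'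

end BrokenPermMatrix

/-- `ρ_m + ρ_mᵀ = I + C_σ`, where `C_σ` is the matrix whose `(e, e')`-entry is `1` if `e` and
`e'` lie in the same cycle of `σ` and `0` otherwise. -/
theorem rhoMatrix_add_transpose [Fintype E] [DecidableEq E]
    (σ : Equiv.Perm E) (m : E → ℤ)
    (hm01 : ∀ e, m e = 0 ∨ m e = 1)
    (hm : ∀ e, ∃! e', σ.SameCycle e e' ∧ m e' = 1) :
    rhoMatrix σ m + (rhoMatrix σ m)ᵀ =
      1 + Matrix.of fun e e' : E => if σ.SameCycle e e' then (1 : ℤ) else 0 := by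
  set A := 1 - brokenPermMatrix σ m
  have hA : IsUnit A.det := (isUnit_iff_isUnit_det A).mp <|
    (isNilpotent_brokenPermMatrix σ m fun e =>
      let ⟨e', hcyc, he'⟩ := (hm e).exists
      ⟨e', hcyc, he' ▸ one_ne_zero⟩).isUnit_one_sub
  have hAt : IsUnit Aᵀ.det := by rwa [det_transpose]
  have key : A + Aᵀ = A * (1 + cycleIncidenceMatrix ℤ σ) * Aᵀ := by
    have hD : IsIdempotentElem (diagonal m) :=
      isIdempotentElem_diagonal fun e => (hm01 e).elim (· ▸ .zero) (· ▸ .one)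
    simp only [A, brokenPermMatrix_eq_inv_permMatrix_mul σ m hm01, transpose_sub,
      transpose_one, transpose_mul, diagonal_transpose, transpose_permMatrix, inv_inv]
    have hP : σ⁻¹.permMatrix ℤ * σ.permMatrix ℤ = 1 := by
      rw [← permMatrix_mul, mul_inv_cancel, permMatrix_one]
    exact (one_sub_mul_one_add_mul_one_sub hP (inv_permMatrix_mul_cycleIncidenceMatrix σ)
      (cycleIncidenceMatrix_mul_permMatrix σ) hD
      (diagonal_mul_cycleIncidenceMatrix_mul_diagonal σ hm01 hm)).symm
  rw [rhoMatrix, transpose_nonsing_inv]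
  exact nonsing_inv_add_nonsing_inv_of_add_eq_mul hA hAt key
end

section
/- Irreducibility of the distinguished component of the master space: let E be a finite set, σ₀, σ₁ permutations of E, and let 𝒲 be the additive monoid of integer weight functions, i.e., of functions ν : E → ℕ whose sum over every cycle of σ₀ and over every cycle of σ₁ is one and the same natural number deg ν. Let 𝒲^∨ be the additive monoid of monoid homomorphisms 𝒲 → ℕ, and let ℤ[𝒲^∨] be its monoid algebra over ℤ. Then the kernel of the ring homomorphism from the polynomial ring ℤ[X_e | e ∈ E] to ℤ[𝒲^∨] sending X_e to the monoid-algebra element corresponding to the evaluation homomorphism ev_e : 𝒲 → ℕ, ν ↦ ν(e), is a prime ideal. -/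
open Finset

variable {E : Type*}

/-- The additive monoid `𝒲` of integer weight functions: functions `ν : E → ℕ` whose sum
over every cycle (orbit) of `σ₀` and over every cycle of `σ₁` is one and the same natural
number (the degree of `ν`). -/
def weightMonoid [Fintype E] [DecidableEq E] (σ₀ σ₁ : Equiv.Perm E) :
    AddSubmonoid (E → ℕ) where
  carrier := {ν | ∃ d : ℕ,
    (∀ e : E, ∑ e' ∈ univ.filter (fun e' => σ₀.SameCycle e e'), ν e' = d) ∧
    (∀ e : E, ∑ e' ∈ univ.filter (fun e' => σ₁.SameCycle e e'), ν e' = d)}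
  zero_mem' := ⟨0, fun _ => by simp, fun _ => by simp⟩
  add_mem' := by
    rintro ν μ ⟨d, h0, h1⟩ ⟨d', g0, g1⟩
    refine ⟨d + d', fun e => ?_, fun e => ?_⟩
    · simp only [Pi.add_apply, Finset.sum_add_distrib, h0 e, g0 e]
    · simp only [Pi.add_apply, Finset.sum_add_distrib, h1 e, g1 e]

/-- Evaluation at `e ∈ E`, as an element `ev_e` of the dual monoid `𝒲^∨ = Hom(𝒲, ℕ)`. -/
def evalHom [Fintype E] [DecidableEq E] (σ₀ σ₁ : Equiv.Perm E) (e : E) :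
    weightMonoid σ₀ σ₁ →+ ℕ where
  toFun ν := ν.1 e
  map_zero' := rfl
  map_add' _ _ := rfl

/-- The dual monoid `𝒲^∨` has `UniqueSums`, since it embeds into the product `𝒲 → ℕ`. -/
instance uniqueSums_dual [Fintype E] [DecidableEq E] (σ₀ σ₁ : Equiv.Perm E) :
    UniqueSums (weightMonoid σ₀ σ₁ →+ ℕ) :=
  UniqueSums.of_injective_addHom
    (⟨fun f => ⇑f, fun _ _ => rfl⟩ : AddHom (weightMonoid σ₀ σ₁ →+ ℕ) (weightMonoid σ₀ σ₁ → ℕ))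
    DFunLike.coe_injective inferInstance

/-- The kernel of the ring homomorphism `ℤ[X_e | e ∈ E] → ℤ[𝒲^∨]`, sending `X_e` to the
monoid-algebra element corresponding to the evaluation homomorphism `ev_e`, is prime. -/
theorem ker_masterSpace_hom_isPrime [Fintype E] [DecidableEq E] (σ₀ σ₁ : Equiv.Perm E) :
    (RingHom.ker (MvPolynomial.aeval (R := ℤ) fun e : E =>
        (AddMonoidAlgebra.single (evalHom σ₀ σ₁ e) 1 :
          AddMonoidAlgebra ℤ (weightMonoid σ₀ σ₁ →+ ℕ)))).IsPrime := by
  haveI : IsDomain (AddMonoidAlgebra ℤ (weightMonoid σ₀ σ₁ →+ ℕ)) :=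
    NoZeroDivisors.to_isDomain _
  exact RingHom.ker_isPrime _
end
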